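/- Let ⦀·⦀ be a norm on ℝ^d and let φ : {0,…,d} → [0,∞) satisfy φ(0) = 0 and φ(l) > 0 for all l ∈ {1,…,d}. Then the function ⦀x⦀_φ = inf{ Σ_{l=1}^{d} φ(l) ⦀z^{(l)}⦀_l : z^{(1)},…,z^{(d)} ∈ ℝ^d, Σ_{l=1}^{d} z^{(l)} = x } (the inf-convolution of the norms φ(l)·⦀·⦀_l) is a norm on ℝ^d whose dual norm is ⦀y⦀_{φ,★} = sup_{l ∈ {1,…,d}} ⦀y⦀_{l,★}/φ(l), i.e. has dual unit ball ⋂_{l=1}^{d} φ(l) B_{l,★}; moreover ⦀x⦀_φ / ⦀x⦀ ≤ φ(ℓ0(x)) for every x ∈ ℝ^d with x ≠ 0. -/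

import Mathlib

open scoped BigOperators

noncomputable section

/-- The Euclidean pairing `⟨x,y⟩ = ∑ i, x i * y i` on `Fin d → ℝ`. -/
def dotp {d : ℕ} (x y : Fin d → ℝ) : ℝ := ∑ i, x i * y i

/-- The coordinate subspace `R_K` of vectors vanishing outside `K`. -/
def RK {d : ℕ} (K : Finset (Fin d)) : Set (Fin d → ℝ) := {x | ∀ j ∉ K, x j = 0}

/-- Orthogonal projection onto `R_K`. -/
def projK {d : ℕ} (K : Finset (Fin d)) (x : Fin d → ℝ) : Fin d → ℝ :=
  fun i => if i ∈ K then x i else 0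

/-- The ℓ0 pseudonorm: number of nonzero components. -/
def ell0 {d : ℕ} (x : Fin d → ℝ) : ℕ := (Function.support x).ncard

/-- `N` is a norm on `ℝ^d`. -/
structure IsNorm {d : ℕ} (N : (Fin d → ℝ) → ℝ) : Prop where
  eq_zero_iff : ∀ x, N x = 0 ↔ x = 0
  smul : ∀ (c : ℝ) (x : Fin d → ℝ), N (c • x) = |c| * N x
  triangle : ∀ x y, N (x + y) ≤ N x + N y

/-- `⦀y⦀_{K,★}`: the dual norm (w.r.t. the Euclidean pairing), on the subspace `R_K`,
of the restriction of `N` to `R_K`. -/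
def restStar {d : ℕ} (N : (Fin d → ℝ) → ℝ) (K : Finset (Fin d)) (y : Fin d → ℝ) : ℝ :=
  sSup {r | ∃ x ∈ RK K, N x ≤ 1 ∧ r = dotp x y}

/-- The dual coordinate-k norm `⦀y⦀_{k,★} = sup_{|K| ≤ k} ⦀y_K⦀_{K,★}`. -/
def dualCoord {d : ℕ} (N : (Fin d → ℝ) → ℝ) (k : ℕ) (y : Fin d → ℝ) : ℝ :=
  sSup {r | ∃ K : Finset (Fin d), K.card ≤ k ∧ r = restStar N K (projK K y)}

/-- The coordinate-k norm: the dual norm of the dual coordinate-k norm. -/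
def coordNorm {d : ℕ} (N : (Fin d → ℝ) → ℝ) (k : ℕ) (x : Fin d → ℝ) : ℝ :=
  sSup {r | ∃ y : Fin d → ℝ, dualCoord N k y ≤ 1 ∧ r = dotp x y}

/-- The Capra coupling `¢(x,y) = ⟨x,y⟩/⦀x⦀` (with `¢(0,y) = 0`). -/
def capra {d : ℕ} (N : (Fin d → ℝ) → ℝ) (x y : Fin d → ℝ) : ℝ :=
  if x = 0 then 0 else dotp x y / N x

/-- Capra conjugate `f^¢(y) = sup_x ( ¢(x,y) ∔ (−f(x)) )`.
(EReal addition is the Moreau lower addition: `⊤ + ⊥ = ⊥`.) -/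
def capraConj {d : ℕ} (N : (Fin d → ℝ) → ℝ) (f : (Fin d → ℝ) → EReal)
    (y : Fin d → ℝ) : EReal :=
  ⨆ x : Fin d → ℝ, ((capra N x y : ℝ) : EReal) + (- f x)

/-- Capra biconjugate `f^{¢¢'}(x) = sup_y ( ¢(x,y) ∔ (−f^¢(y)) )`. -/
def capraBiconj {d : ℕ} (N : (Fin d → ℝ) → ℝ) (f : (Fin d → ℝ) → EReal)
    (x : Fin d → ℝ) : EReal :=
  ⨆ y : Fin d → ℝ, ((capra N x y : ℝ) : EReal) + (- capraConj N f y)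

/-- Fenchel conjugate `g^★(y) = sup_x ( ⟨x,y⟩ ∔ (−g(x)) )`. -/
def fenchelConj {d : ℕ} (g : (Fin d → ℝ) → EReal) (y : Fin d → ℝ) : EReal :=
  ⨆ x : Fin d → ℝ, ((dotp x y : ℝ) : EReal) + (- g x)

/-- The inf-convolution of the norms `φ(l)·⦀·⦀_l`, `l ∈ {1,…,d}`. -/
def infConv {d : ℕ} (N : (Fin d → ℝ) → ℝ) (φ : ℕ → ℝ) (x : Fin d → ℝ) : ℝ :=
  sInf {r | ∃ z : ℕ → (Fin d → ℝ),
    (∑ l ∈ Finset.Icc 1 d, z l) = x ∧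
    r = ∑ l ∈ Finset.Icc 1 d, φ l * coordNorm N l (z l)}

/-- The dual norm of a norm `M`, with respect to the Euclidean pairing. -/
def dualNorm {d : ℕ} (M : (Fin d → ℝ) → ℝ) (y : Fin d → ℝ) : ℝ :=
  sSup {r | ∃ x : Fin d → ℝ, M x ≤ 1 ∧ r = dotp x y}


/-!
Every norm in sight is a support function `σ_S(y) = sup_{x ∈ S} ⟨x, y⟩` of a bounded, symmetric
set `S` not contained in a hyperplane: a dual norm is `σ` of a unit ball, and `⦀·⦀_{k,★}` is `σ` of
the `k`-sparse vectors of the unit ball of `⦀·⦀`. Such a `σ_S` is a norm, and it is its own bidual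
without any separation argument, because every point of `S` lies in the dual unit ball of `σ_S`.
So `⦀·⦀_k` has dual norm `⦀·⦀_{k,★}` and is bounded by `⦀·⦀` on `k`-sparse vectors.

The inf-convolution of finitely many norms `M_l` is a norm whose dual norm is `max_l M_l^★`:
along any decomposition `x = ∑ z_l` the pairing `⟨x, y⟩` splits, and each `⟨z_l, y⟩` is at most
`M_l(z_l) M_l^★(y)`. The one-term decomposition `z_{ℓ0(x)} = x` then gives
`⦀x⦀_φ ≤ φ(ℓ0 x) ⦀x⦀_{ℓ0 x} ≤ φ(ℓ0 x) ⦀x⦀`.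
-/

open Matrix Set Bornology

lemma dotp_eq_dotProduct {d : ℕ} (x y : Fin d → ℝ) : dotp x y = x ⬝ᵥ y := rfl

lemma smul_eq_abs_mul_of_smul_le {E : Type*} [AddCommGroup E] [Module ℝ E] {f : E → ℝ}
    (hf0 : ∀ x, 0 ≤ f x) (hf : ∀ (c : ℝ) x, f (c • x) ≤ |c| * f x) (c : ℝ) (x : E) :
    f (c • x) = |c| * f x := by
  rcases eq_or_ne c 0 with rfl | hc
  · rw [abs_zero, zero_mul]
    exact le_antisymm (by simpa using hf 0 x) (hf0 _)
  · refine le_antisymm (hf c x) ?_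
    calc |c| * f x = |c| * f (c⁻¹ • c • x) := by rw [smul_smul, inv_mul_cancel₀ hc, one_smul]
      _ ≤ |c| * (|c⁻¹| * f (c • x)) := mul_le_mul_of_nonneg_left (hf _ _) (abs_nonneg c)
      _ = f (c • x) := by rw [abs_inv, mul_inv_cancel_left₀ (abs_ne_zero.2 hc)]

lemma le_csInf_mul {T : Set ℝ} {a B : ℝ} (hT : T.Nonempty) (hB : 0 ≤ B)
    (h : ∀ r ∈ T, a ≤ r * B) : a ≤ sInf T * B := by
  rcases hB.eq_or_lt with rfl | hB
  · obtain ⟨r, hr⟩ := hT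
    simpa using h r hr
  · rw [← div_le_iff₀ hB]
    exact le_csInf hT fun r hr => (div_le_iff₀ hB).2 (h r hr)

section Norm

variable {d : ℕ} {N : (Fin d → ℝ) → ℝ}

lemma IsNorm.map_zero (hN : IsNorm N) : N 0 = 0 := (hN.eq_zero_iff 0).2 rfl

lemma IsNorm.map_neg (hN : IsNorm N) (x : Fin d → ℝ) : N (-x) = N x := by
  simpa using hN.smul (-1) x

lemma IsNorm.nonneg (hN : IsNorm N) (x : Fin d → ℝ) : 0 ≤ N x := by
  have h := hN.triangle x (-x)
  rw [add_neg_cancel, hN.map_zero, hN.map_neg] at h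
  linarith

lemma IsNorm.pos (hN : IsNorm N) {x : Fin d → ℝ} (hx : x ≠ 0) : 0 < N x :=
  (hN.nonneg x).lt_of_ne fun h => hx ((hN.eq_zero_iff x).1 h.symm)

lemma IsNorm.const_mul (hN : IsNorm N) {c : ℝ} (hc : 0 < c) : IsNorm fun x => c * N x where
  eq_zero_iff x := by rw [mul_eq_zero, hN.eq_zero_iff, or_iff_right hc.ne']
  smul a x := by rw [hN.smul]; ring
  triangle x y := by nlinarith [hN.triangle x y]

lemma IsNorm.of_dim_eq_zero (hd : d = 0) (hN : N 0 = 0) : IsNorm N := by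
  subst hd
  have h (x : Fin 0 → ℝ) : x = 0 := Subsingleton.elim x 0
  exact ⟨fun x => by rw [h x]; exact iff_of_true hN rfl,
    fun c x => by rw [h (c • x), h x, hN, mul_zero],
    fun x y => by rw [h (x + y), h x, h y, hN, add_zero]⟩

lemma IsNorm.convexOn (hN : IsNorm N) : ConvexOn ℝ univ N :=
  ⟨convex_univ, fun x _ y _ a b ha hb _ => by
    simpa [hN.smul, abs_of_nonneg ha, abs_of_nonneg hb] using hN.triangle (a • x) (b • y)⟩

lemma IsNorm.exists_pos_mul_norm_le (hN : IsNorm N) : ∃ m > 0, ∀ x, m * ‖x‖ ≤ N x := by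
  have hcont : Continuous N := continuousOn_univ.1 (hN.convexOn.continuousOn isOpen_univ)
  obtain ⟨m, hm, hmS⟩ := (isCompact_sphere (0 : Fin d → ℝ) 1).exists_forall_le'
    hcont.continuousOn (a := 0) fun x hx => hN.pos (Metric.ne_of_mem_sphere hx one_ne_zero)
  refine ⟨m, hm, fun x => ?_⟩
  rcases eq_or_ne x 0 with rfl | hx
  · simp [hN.map_zero]
  have hx' : 0 < ‖x‖ := norm_pos_iff.2 hx
  have := hmS (‖x‖⁻¹ • x) (by simp [norm_smul, hx'.ne'])
  rwa [hN.smul, abs_of_pos (inv_pos.2 hx'), le_inv_mul_iff₀ hx', mul_comm] at this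

lemma IsNorm.isBounded_ball (hN : IsNorm N) : IsBounded {x | N x ≤ 1} := by
  obtain ⟨m, hm, hmN⟩ := hN.exists_pos_mul_norm_le
  refine (Metric.isBounded_closedBall (x := 0) (r := m⁻¹)).subset fun x hx => ?_
  simpa using (le_inv_mul_iff₀ hm).2 ((hmN x).trans hx)

end Norm

def supportFn {d : ℕ} (S : Set (Fin d → ℝ)) (y : Fin d → ℝ) : ℝ := sSup ((· ⬝ᵥ y) '' S)

structure IsNormingSet {d : ℕ} (S : Set (Fin d → ℝ)) : Prop where
  isBounded : IsBounded S
  nonempty : S.Nonempty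
  neg_mem : ∀ x ∈ S, -x ∈ S
  eq_zero_of_dotProduct_eq_zero : ∀ y, (∀ x ∈ S, x ⬝ᵥ y = 0) → y = 0

section SupportFn

variable {d : ℕ} {S : Set (Fin d → ℝ)}

lemma bddAbove_dotProduct_image (hS : IsBounded S) (y : Fin d → ℝ) :
    BddAbove ((· ⬝ᵥ y) '' S) :=
  ((hS.isCompact_closure.image (by unfold dotProduct; fun_prop)).isBounded.bddAbove).mono
    (image_mono subset_closure)

lemma dotProduct_le_supportFn (hS : IsBounded S) {x : Fin d → ℝ} (hx : x ∈ S) (y : Fin d → ℝ) :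
    x ⬝ᵥ y ≤ supportFn S y :=
  le_csSup (bddAbove_dotProduct_image hS y) (mem_image_of_mem _ hx)

lemma supportFn_le (hS : S.Nonempty) {y : Fin d → ℝ} {B : ℝ} (h : ∀ x ∈ S, x ⬝ᵥ y ≤ B) :
    supportFn S y ≤ B :=
  csSup_le (hS.image _) (forall_mem_image.2 h)

namespace IsNormingSet

lemma abs_dotProduct_le (hS : IsNormingSet S) {x : Fin d → ℝ} (hx : x ∈ S) (y : Fin d → ℝ) :
    |x ⬝ᵥ y| ≤ supportFn S y :=
  abs_le'.2 ⟨dotProduct_le_supportFn hS.isBounded hx y,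
    by simpa using dotProduct_le_supportFn hS.isBounded (hS.neg_mem x hx) y⟩

lemma supportFn_nonneg (hS : IsNormingSet S) (y : Fin d → ℝ) : 0 ≤ supportFn S y :=
  have ⟨_, hx⟩ := hS.nonempty
  (abs_nonneg _).trans (hS.abs_dotProduct_le hx y)

theorem isNorm_supportFn (hS : IsNormingSet S) : IsNorm (supportFn S) where
  eq_zero_iff y := by
    refine ⟨fun h => hS.eq_zero_of_dotProduct_eq_zero y fun x hx => ?_, ?_⟩
    · exact abs_nonpos_iff.1 (h ▸ hS.abs_dotProduct_le hx y)
    · rintro rfl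
      exact le_antisymm (supportFn_le hS.nonempty fun x _ => by simp) (hS.supportFn_nonneg 0)
  smul := smul_eq_abs_mul_of_smul_le hS.supportFn_nonneg fun c y =>
    supportFn_le hS.nonempty fun x hx => by
      rw [dotProduct_smul, smul_eq_mul]
      calc c * (x ⬝ᵥ y) ≤ |c| * |x ⬝ᵥ y| := by rw [← abs_mul]; exact le_abs_self _
        _ ≤ |c| * supportFn S y := by gcongr; exact hS.abs_dotProduct_le hx y
  triangle y y' := supportFn_le hS.nonempty fun x hx => by
    rw [dotProduct_add]
    exact add_le_add (dotProduct_le_supportFn hS.isBounded hx y)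
      (dotProduct_le_supportFn hS.isBounded hx y')

end IsNormingSet

end SupportFn

section DualNorm

variable {d : ℕ} {M : (Fin d → ℝ) → ℝ}

lemma dualNorm_eq_supportFn (M : (Fin d → ℝ) → ℝ) : dualNorm M = supportFn {x | M x ≤ 1} := by
  funext y
  unfold dualNorm supportFn
  congr 1
  ext r
  simp [dotp_eq_dotProduct, eq_comm]

lemma IsNorm.isNormingSet_ball (hM : IsNorm M) : IsNormingSet {x | M x ≤ 1} where
  isBounded := hM.isBounded_ball
  nonempty := ⟨0, by simp [hM.map_zero]⟩
  neg_mem x hx := by simpa [hM.map_neg] using hx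
  eq_zero_of_dotProduct_eq_zero y h := by
    by_contra hy
    have := h ((M y)⁻¹ • y) (by
      simp [hM.smul, abs_of_pos (inv_pos.2 (hM.pos hy)), inv_mul_cancel₀ (hM.pos hy).ne'])
    simp [hM.pos hy |>.ne', hy] at this

lemma IsNorm.dualNorm (hM : IsNorm M) : IsNorm (dualNorm M) :=
  dualNorm_eq_supportFn M ▸ hM.isNormingSet_ball.isNorm_supportFn

lemma dotProduct_le_dualNorm (hM : IsNorm M) {x : Fin d → ℝ} (hx : M x ≤ 1) (y : Fin d → ℝ) :
    x ⬝ᵥ y ≤ dualNorm M y :=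
  dualNorm_eq_supportFn M ▸ dotProduct_le_supportFn hM.isBounded_ball hx y

lemma dualNorm_le (hM : IsNorm M) {y : Fin d → ℝ} {B : ℝ} (h : ∀ x, M x ≤ 1 → x ⬝ᵥ y ≤ B) :
    dualNorm M y ≤ B :=
  dualNorm_eq_supportFn M ▸ supportFn_le hM.isNormingSet_ball.nonempty h

lemma dotProduct_le_mul_dualNorm (hM : IsNorm M) (x y : Fin d → ℝ) :
    x ⬝ᵥ y ≤ M x * dualNorm M y := by
  rcases eq_or_ne x 0 with rfl | hx
  · simp [hM.map_zero]
  have hMx := hM.pos hx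
  have := dotProduct_le_dualNorm hM (x := (M x)⁻¹ • x)
    (by rw [hM.smul, abs_of_pos (inv_pos.2 hMx), inv_mul_cancel₀ hMx.ne']) y
  rwa [smul_dotProduct, smul_eq_mul, inv_mul_le_iff₀ hMx] at this

lemma dualNorm_le_dualNorm_of_le {M' : (Fin d → ℝ) → ℝ} (hM : IsNorm M) (hM' : IsNorm M')
    (h : ∀ x, M' x ≤ M x) (y : Fin d → ℝ) : dualNorm M y ≤ dualNorm M' y :=
  dualNorm_le hM fun x hx => dotProduct_le_dualNorm hM' ((h x).trans hx) y

lemma dualNorm_const_mul (hM : IsNorm M) {c : ℝ} (hc : 0 < c) (y : Fin d → ℝ) :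
    dualNorm (fun x => c * M x) y = dualNorm M y / c := by
  refine le_antisymm (dualNorm_le (hM.const_mul hc) fun x hx => ?_) ?_
  · have := dotProduct_le_dualNorm hM (x := c • x) (by rwa [hM.smul, abs_of_pos hc]) y
    rwa [smul_dotProduct, smul_eq_mul, mul_comm, ← le_div_iff₀ hc] at this
  · rw [div_le_iff₀ hc]
    refine dualNorm_le hM fun x hx => ?_
    have := dotProduct_le_dualNorm (hM.const_mul hc) (x := c⁻¹ • x)
      (by rwa [hM.smul, abs_of_pos (inv_pos.2 hc), mul_inv_cancel_left₀ hc.ne']) y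
    rwa [smul_dotProduct, smul_eq_mul, inv_mul_le_iff₀ hc, mul_comm] at this

namespace IsNormingSet

variable {S : Set (Fin d → ℝ)}

lemma dualNorm_supportFn_le_one (hS : IsNormingSet S) {x : Fin d → ℝ} (hx : x ∈ S) :
    dualNorm (supportFn S) x ≤ 1 :=
  dualNorm_le hS.isNorm_supportFn fun z hz =>
    (dotProduct_comm z x ▸ dotProduct_le_supportFn hS.isBounded hx z).trans hz

theorem dualNorm_dualNorm_supportFn (hS : IsNormingSet S) :
    dualNorm (dualNorm (supportFn S)) = supportFn S := by
  have hσ := hS.isNorm_supportFn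
  funext y
  refine le_antisymm (dualNorm_le hσ.dualNorm fun x hx => ?_) ?_
  · calc x ⬝ᵥ y = y ⬝ᵥ x := dotProduct_comm x y
      _ ≤ supportFn S y * dualNorm (supportFn S) x := dotProduct_le_mul_dualNorm hσ y x
      _ ≤ supportFn S y := mul_le_of_le_one_right (hS.supportFn_nonneg y) hx
  · exact supportFn_le hS.nonempty fun x hx =>
      dotProduct_le_dualNorm hσ.dualNorm (hS.dualNorm_supportFn_le_one hx) y

end IsNormingSet

end DualNorm

section Sparse

variable {d : ℕ} {N : (Fin d → ℝ) → ℝ}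

lemma ell0_le_card {K : Finset (Fin d)} {x : Fin d → ℝ} (hx : x ∈ RK K) : ell0 x ≤ K.card := by
  rw [ell0, ← ncard_coe_finset]
  exact ncard_le_ncard (fun i hi => by_contra fun hiK => hi (hx i hiK))

lemma exists_mem_RK_card_eq_ell0 (x : Fin d → ℝ) :
    ∃ K : Finset (Fin d), x ∈ RK K ∧ K.card = ell0 x :=
  ⟨Finset.univ.filter (x · ≠ 0), fun i hi => by simpa using hi, by
    rw [ell0, ← ncard_coe_finset]
    congr
    ext
    simp⟩

lemma ell0_smul_le (c : ℝ) (x : Fin d → ℝ) : ell0 (c • x) ≤ ell0 x :=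
  ncard_le_ncard (Function.support_const_smul_subset c x)

lemma ell0_le (x : Fin d → ℝ) : ell0 x ≤ d := by
  simpa [ell0] using ncard_le_ncard (subset_univ (Function.support x))

lemma one_le_ell0 {x : Fin d → ℝ} (hx : x ≠ 0) : 1 ≤ ell0 x :=
  (ncard_pos (toFinite _)).2 (Function.support_nonempty_iff.2 hx)

def sparseBall (N : (Fin d → ℝ) → ℝ) (k : ℕ) : Set (Fin d → ℝ) := {x | ell0 x ≤ k ∧ N x ≤ 1}

lemma IsNorm.isBounded_sparseBall (hN : IsNorm N) (k : ℕ) : IsBounded (sparseBall N k) :=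
  hN.isBounded_ball.subset fun _ hx => hx.2

lemma IsNorm.zero_mem_sparseBall (hN : IsNorm N) (k : ℕ) : 0 ∈ sparseBall N k := by
  simp [sparseBall, ell0, hN.map_zero]

lemma IsNorm.isNormingSet_sparseBall (hN : IsNorm N) {k : ℕ} (hk : 1 ≤ k) :
    IsNormingSet (sparseBall N k) where
  isBounded := hN.isBounded_sparseBall k
  nonempty := ⟨0, hN.zero_mem_sparseBall k⟩
  neg_mem x hx := by simpa [sparseBall, ell0, hN.map_neg] using hx
  eq_zero_of_dotProduct_eq_zero y h := by
    funext i
    set e : Fin d → ℝ := Pi.single i 1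
    have he := hN.pos (x := e) (by simp [e])
    have hmem : (N e)⁻¹ • e ∈ sparseBall N k := by
      refine ⟨(ell0_le_card (K := {i}) fun j hj => ?_).trans hk, ?_⟩
      · simp [e, Finset.mem_singleton.not.1 hj]
      · rw [hN.smul, abs_of_pos (inv_pos.2 he), inv_mul_cancel₀ he.ne']
    simpa [e, he.ne'] using h _ hmem

lemma dotProduct_projK {K : Finset (Fin d)} {x : Fin d → ℝ} (hx : x ∈ RK K) (y : Fin d → ℝ) :
    x ⬝ᵥ projK K y = x ⬝ᵥ y :=
  Finset.sum_congr rfl fun i _ => by by_cases hi : i ∈ K <;> simp [projK, hi, hx i]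

theorem dualCoord_eq_supportFn (hN : IsNorm N) (k : ℕ) :
    dualCoord N k = supportFn (sparseBall N k) := by
  funext y
  have hrest (K : Finset (Fin d)) :
      BddAbove {r | ∃ x ∈ RK K, N x ≤ 1 ∧ r = dotp x (projK K y)} :=
    (bddAbove_dotProduct_image hN.isBounded_ball (projK K y)).mono
      (by rintro _ ⟨x, -, hx, rfl⟩; exact ⟨x, hx, rfl⟩)
  have hcoord : BddAbove {r | ∃ K : Finset (Fin d), K.card ≤ k ∧ r = restStar N K (projK K y)} :=
    (finite_range fun K => restStar N K (projK K y)).bddAbove.mono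
      (by rintro _ ⟨K, -, rfl⟩; exact ⟨K, rfl⟩)
  refine le_antisymm (csSup_le ⟨_, ∅, by simp, rfl⟩ ?_) ?_
  · rintro _ ⟨K, hK, rfl⟩
    refine csSup_le ⟨0, 0, fun _ _ => rfl, by simp [hN.map_zero], by simp [dotp]⟩ ?_
    rintro _ ⟨x, hxK, hx, rfl⟩
    rw [dotp_eq_dotProduct, dotProduct_projK hxK]
    exact dotProduct_le_supportFn (hN.isBounded_sparseBall k)
      ⟨(ell0_le_card hxK).trans hK, hx⟩ y
  · refine supportFn_le ⟨0, hN.zero_mem_sparseBall k⟩ fun x ⟨hxk, hx⟩ => ?_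
    obtain ⟨K, hxK, hK⟩ := exists_mem_RK_card_eq_ell0 x
    calc x ⬝ᵥ y = dotp x (projK K y) := (dotProduct_projK hxK y).symm
      _ ≤ restStar N K (projK K y) := le_csSup (hrest K) ⟨x, hxK, hx, rfl⟩
      _ ≤ dualCoord N k y := le_csSup hcoord ⟨K, hK ▸ hxk, rfl⟩

end Sparse

section CoordNorm

variable {d : ℕ} {N : (Fin d → ℝ) → ℝ} {k : ℕ}

lemma coordNorm_eq_dualNorm (N : (Fin d → ℝ) → ℝ) (k : ℕ) :
    coordNorm N k = dualNorm (dualCoord N k) := by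
  funext x
  unfold coordNorm dualNorm
  simp only [dotp_eq_dotProduct, dotProduct_comm x]

lemma IsNorm.coordNorm (hN : IsNorm N) (hk : 1 ≤ k) : IsNorm (coordNorm N k) := by
  rw [coordNorm_eq_dualNorm, dualCoord_eq_supportFn hN]
  exact (hN.isNormingSet_sparseBall hk).isNorm_supportFn.dualNorm

lemma dualNorm_coordNorm (hN : IsNorm N) (hk : 1 ≤ k) :
    dualNorm (coordNorm N k) = dualCoord N k := by
  rw [coordNorm_eq_dualNorm, dualCoord_eq_supportFn hN]
  exact (hN.isNormingSet_sparseBall hk).dualNorm_dualNorm_supportFn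

lemma coordNorm_le_of_ell0_le (hN : IsNorm N) (hk : 1 ≤ k) {x : Fin d → ℝ} (hx : ell0 x ≤ k) :
    coordNorm N k x ≤ N x := by
  rcases eq_or_ne x 0 with rfl | hx0
  · rw [(hN.coordNorm hk).map_zero, hN.map_zero]
  have hNx := hN.pos hx0
  have hmem : (N x)⁻¹ • x ∈ sparseBall N k :=
    ⟨(ell0_smul_le _ x).trans hx,
      by rw [hN.smul, abs_of_pos (inv_pos.2 hNx), inv_mul_cancel₀ hNx.ne']⟩
  have := coordNorm_eq_dualNorm N k ▸ dualCoord_eq_supportFn hN k ▸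
    (hN.isNormingSet_sparseBall hk).dualNorm_supportFn_le_one hmem
  rwa [(hN.coordNorm hk).smul, abs_of_pos (inv_pos.2 hNx), inv_mul_le_iff₀ hNx, mul_one] at this

end CoordNorm

def infimalConvCosts {d : ℕ} {ι : Type*} (s : Finset ι) (M : ι → (Fin d → ℝ) → ℝ)
    (x : Fin d → ℝ) : Set ℝ :=
  {r | ∃ z : ι → Fin d → ℝ, ∑ l ∈ s, z l = x ∧ r = ∑ l ∈ s, M l (z l)}

def infimalConv {d : ℕ} {ι : Type*} (s : Finset ι) (M : ι → (Fin d → ℝ) → ℝ)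
    (x : Fin d → ℝ) : ℝ :=
  sInf (infimalConvCosts s M x)

section InfimalConv

open scoped Pointwise

variable {d : ℕ} {ι : Type*} {s : Finset ι} {M : ι → (Fin d → ℝ) → ℝ}

lemma nonneg_of_mem_infimalConvCosts (hM : ∀ l ∈ s, IsNorm (M l)) {x : Fin d → ℝ} {r : ℝ}
    (hr : r ∈ infimalConvCosts s M x) : 0 ≤ r := by
  obtain ⟨z, -, rfl⟩ := hr
  exact Finset.sum_nonneg fun l hl => (hM l hl).nonneg _

lemma bddBelow_infimalConvCosts (hM : ∀ l ∈ s, IsNorm (M l)) (x : Fin d → ℝ) :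
    BddBelow (infimalConvCosts s M x) :=
  ⟨0, fun _ => nonneg_of_mem_infimalConvCosts hM⟩

lemma mem_infimalConvCosts (hM : ∀ l ∈ s, IsNorm (M l)) {l : ι} (hl : l ∈ s) (x : Fin d → ℝ) :
    M l x ∈ infimalConvCosts s M x := by
  classical
  refine ⟨Pi.single l x, by simp [hl], ?_⟩
  rw [Finset.sum_eq_single_of_mem l hl fun l' hl' hne => by simp [hne, (hM l' hl').map_zero]]
  simp

lemma infimalConv_le (hM : ∀ l ∈ s, IsNorm (M l)) {l : ι} (hl : l ∈ s) (x : Fin d → ℝ) :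
    infimalConv s M x ≤ M l x :=
  csInf_le (bddBelow_infimalConvCosts hM x) (mem_infimalConvCosts hM hl x)

lemma infimalConv_zero (hM : ∀ l ∈ s, IsNorm (M l)) : infimalConv s M 0 = 0 := by
  have h0 : (0 : ℝ) ∈ infimalConvCosts s M 0 :=
    ⟨0, by simp, (Finset.sum_eq_zero fun l hl => (hM l hl).map_zero).symm⟩
  exact le_antisymm (csInf_le (bddBelow_infimalConvCosts hM 0) h0)
    (le_csInf ⟨0, h0⟩ fun _ => nonneg_of_mem_infimalConvCosts hM)

lemma infimalConvCosts_nonempty (hs : s.Nonempty) (hM : ∀ l ∈ s, IsNorm (M l)) (x : Fin d → ℝ) :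
    (infimalConvCosts s M x).Nonempty :=
  ⟨_, mem_infimalConvCosts hM hs.choose_spec x⟩

lemma infimalConv_nonneg (hs : s.Nonempty) (hM : ∀ l ∈ s, IsNorm (M l)) (x : Fin d → ℝ) :
    0 ≤ infimalConv s M x :=
  le_csInf (infimalConvCosts_nonempty hs hM x) fun _ => nonneg_of_mem_infimalConvCosts hM

lemma infimalConv_smul_le (hs : s.Nonempty) (hM : ∀ l ∈ s, IsNorm (M l)) (c : ℝ) (x : Fin d → ℝ) :
    infimalConv s M (c • x) ≤ |c| * infimalConv s M x := by
  rw [mul_comm]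
  refine le_csInf_mul (infimalConvCosts_nonempty hs hM x) (abs_nonneg c) ?_
  rintro _ ⟨z, rfl, rfl⟩
  refine (csInf_le (bddBelow_infimalConvCosts hM _)
    ⟨fun l => c • z l, Finset.smul_sum.symm, rfl⟩).trans_eq ?_
  rw [Finset.sum_mul]
  exact Finset.sum_congr rfl fun l hl => by rw [(hM l hl).smul, mul_comm]

lemma infimalConv_add_le (hs : s.Nonempty) (hM : ∀ l ∈ s, IsNorm (M l)) (x y : Fin d → ℝ) :
    infimalConv s M (x + y) ≤ infimalConv s M x + infimalConv s M y := by
  have hne := infimalConvCosts_nonempty hs hM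
  unfold infimalConv
  rw [← csInf_add (hne x) (bddBelow_infimalConvCosts hM x) (hne y) (bddBelow_infimalConvCosts hM y)]
  refine le_csInf ((hne x).add (hne y)) ?_
  rintro _ ⟨_, ⟨z, rfl, rfl⟩, _, ⟨w, rfl, rfl⟩, rfl⟩
  refine (csInf_le (bddBelow_infimalConvCosts hM _) ⟨z + w, Finset.sum_add_distrib, rfl⟩).trans ?_
  simp only [Pi.add_apply, ← Finset.sum_add_distrib]
  exact Finset.sum_le_sum fun l hl => (hM l hl).triangle _ _

lemma dotProduct_le_infimalConv_mul (hs : s.Nonempty) (hM : ∀ l ∈ s, IsNorm (M l))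
    {y : Fin d → ℝ} {B : ℝ} (hB : 0 ≤ B)
    (h : ∀ l ∈ s, dualNorm (M l) y ≤ B) (x : Fin d → ℝ) :
    x ⬝ᵥ y ≤ infimalConv s M x * B := by
  refine le_csInf_mul (infimalConvCosts_nonempty hs hM x) hB ?_
  rintro _ ⟨z, rfl, rfl⟩
  rw [sum_dotProduct, Finset.sum_mul]
  exact Finset.sum_le_sum fun l hl => (dotProduct_le_mul_dualNorm (hM l hl) (z l) y).trans
    (mul_le_mul_of_nonneg_left (h l hl) ((hM l hl).nonneg _))

lemma le_sup'_dualNorm (hs : s.Nonempty) (y : Fin d → ℝ) {l : ι} (hl : l ∈ s) :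
    dualNorm (M l) y ≤ s.sup' hs fun l => dualNorm (M l) y :=
  Finset.le_sup' (fun l => dualNorm (M l) y) hl

lemma sup'_dualNorm_nonneg (hs : s.Nonempty) (hM : ∀ l ∈ s, IsNorm (M l)) (y : Fin d → ℝ) :
    0 ≤ s.sup' hs fun l => dualNorm (M l) y :=
  ((hM _ hs.choose_spec).dualNorm.nonneg y).trans (le_sup'_dualNorm hs y hs.choose_spec)

theorem IsNorm.infimalConv (hs : s.Nonempty) (hM : ∀ l ∈ s, IsNorm (M l)) :
    IsNorm (infimalConv s M) where
  eq_zero_iff x := by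
    refine ⟨fun h => dotProduct_self_eq_zero.1 (le_antisymm ?_ ?_),
      fun h => h ▸ infimalConv_zero hM⟩
    · simpa [h] using dotProduct_le_infimalConv_mul hs hM (sup'_dualNorm_nonneg hs hM x)
        (fun l hl => le_sup'_dualNorm hs x hl) x
    · exact Finset.sum_nonneg fun i _ => mul_self_nonneg (x i)
  smul := smul_eq_abs_mul_of_smul_le (infimalConv_nonneg hs hM) (infimalConv_smul_le hs hM)
  triangle := infimalConv_add_le hs hM

theorem dualNorm_infimalConv (hs : s.Nonempty) (hM : ∀ l ∈ s, IsNorm (M l)) (y : Fin d → ℝ) :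
    dualNorm (infimalConv s M) y = s.sup' hs fun l => dualNorm (M l) y := by
  have hI := IsNorm.infimalConv hs hM
  refine le_antisymm (dualNorm_le hI fun x hx => ?_) (Finset.sup'_le hs _ fun l hl =>
    dualNorm_le_dualNorm_of_le (hM l hl) hI (infimalConv_le hM hl) y)
  exact (dotProduct_le_infimalConv_mul hs hM (sup'_dualNorm_nonneg hs hM y)
    (fun l hl => le_sup'_dualNorm hs y hl) x).trans
    (mul_le_of_le_one_left (sup'_dualNorm_nonneg hs hM y) hx)

end InfimalConv

section InfConv

variable {d : ℕ} {N : (Fin d → ℝ) → ℝ} {φ : ℕ → ℝ}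

lemma infConv_eq_infimalConv (N : (Fin d → ℝ) → ℝ) (φ : ℕ → ℝ) :
    infConv N φ = infimalConv (Finset.Icc 1 d) fun l x => φ l * coordNorm N l x := rfl

lemma isNorm_weightedCoordNorm (hN : IsNorm N) (hφpos : ∀ l : ℕ, 1 ≤ l → l ≤ d → 0 < φ l) :
    ∀ l ∈ Finset.Icc 1 d, IsNorm fun x => φ l * coordNorm N l x := fun l hl =>
  have ⟨h1, hd⟩ := Finset.mem_Icc.1 hl
  (hN.coordNorm h1).const_mul (hφpos l h1 hd)

lemma dualNorm_eq_zero_of_dim_eq_zero (hd : d = 0) (M : (Fin d → ℝ) → ℝ) (y : Fin d → ℝ) :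
    dualNorm M y = 0 := by
  subst hd
  have hS : ∀ r ∈ {r | ∃ x : Fin 0 → ℝ, M x ≤ 1 ∧ r = dotp x y}, r = 0 := by
    rintro _ ⟨x, -, rfl⟩
    simp [dotp]
  exact le_antisymm (Real.sSup_nonpos fun r hr => (hS r hr).le)
    (Real.sSup_nonneg fun r hr => (hS r hr).ge)

theorem isNorm_infConv (hN : IsNorm N) (hφpos : ∀ l : ℕ, 1 ≤ l → l ≤ d → 0 < φ l) :
    IsNorm (infConv N φ) := by
  rw [infConv_eq_infimalConv]
  rcases (Finset.Icc 1 d).eq_empty_or_nonempty with hs | hs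
  · exact IsNorm.of_dim_eq_zero (by simpa using hs) (infimalConv_zero (hs ▸ by simp))
  · exact IsNorm.infimalConv hs (isNorm_weightedCoordNorm hN hφpos)

theorem dualNorm_infConv (hN : IsNorm N) (hφpos : ∀ l : ℕ, 1 ≤ l → l ≤ d → 0 < φ l)
    (y : Fin d → ℝ) : dualNorm (infConv N φ) y
      = sSup {r | ∃ l : ℕ, 1 ≤ l ∧ l ≤ d ∧ r = dualCoord N l y / φ l} := by
  have hT : {r | ∃ l : ℕ, 1 ≤ l ∧ l ≤ d ∧ r = dualCoord N l y / φ l}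
      = (fun l => dualCoord N l y / φ l) '' (Finset.Icc 1 d : Set ℕ) := by
    ext
    simp [eq_comm, and_assoc]
  rcases (Finset.Icc 1 d).eq_empty_or_nonempty with hs | hs
  · rw [dualNorm_eq_zero_of_dim_eq_zero (by simpa using hs), hT, hs, Finset.coe_empty,
      image_empty, Real.sSup_empty]
  · rw [hT, ← Finset.sup'_eq_csSup_image _ hs, infConv_eq_infimalConv,
      dualNorm_infimalConv hs (isNorm_weightedCoordNorm hN hφpos)]
    refine Finset.sup'_congr hs rfl fun l hl => ?_
    have ⟨h1, hd⟩ := Finset.mem_Icc.1 hl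
    rw [dualNorm_const_mul (hN.coordNorm h1) (hφpos l h1 hd), dualNorm_coordNorm hN h1]

theorem dualNorm_infConv_le_one_iff (hN : IsNorm N) (hφpos : ∀ l : ℕ, 1 ≤ l → l ≤ d → 0 < φ l)
    (y : Fin d → ℝ) :
    dualNorm (infConv N φ) y ≤ 1 ↔ ∀ l ∈ Finset.Icc 1 d, dualCoord N l y ≤ φ l := by
  have hT : BddAbove {r | ∃ l : ℕ, 1 ≤ l ∧ l ≤ d ∧ r = dualCoord N l y / φ l} :=
    ((Finset.Icc 1 d).finite_toSet.image fun l => dualCoord N l y / φ l).bddAbove.mono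
      (by rintro _ ⟨l, h1, hd, rfl⟩; exact ⟨l, by simp [h1, hd], rfl⟩)
  rw [dualNorm_infConv hN hφpos y]
  refine ⟨fun h l hl => ?_, fun h => Real.sSup_le ?_ zero_le_one⟩
  · have ⟨h1, hd⟩ := Finset.mem_Icc.1 hl
    exact (div_le_one (hφpos l h1 hd)).1 ((le_csSup hT ⟨l, h1, hd, rfl⟩).trans h)
  · rintro _ ⟨l, h1, hd, rfl⟩
    exact (div_le_one (hφpos l h1 hd)).2 (h l (Finset.mem_Icc.2 ⟨h1, hd⟩))

theorem infConv_le_mul_of_ell0 (hN : IsNorm N) (hφpos : ∀ l : ℕ, 1 ≤ l → l ≤ d → 0 < φ l)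
    {x : Fin d → ℝ} (hx : x ≠ 0) : infConv N φ x ≤ φ (ell0 x) * N x := by
  have h1 := one_le_ell0 hx
  have hd := ell0_le x
  calc infConv N φ x ≤ φ (ell0 x) * coordNorm N (ell0 x) x :=
        infimalConv_le (isNorm_weightedCoordNorm hN hφpos) (Finset.mem_Icc.2 ⟨h1, hd⟩) x
    _ ≤ φ (ell0 x) * N x :=
        mul_le_mul_of_nonneg_left (coordNorm_le_of_ell0_le hN h1 le_rfl) (hφpos _ h1 hd).le

end InfConv

theorem statement19_general {d : ℕ} (N : (Fin d → ℝ) → ℝ) (hN : IsNorm N) (φ : ℕ → ℝ)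
    (hφpos : ∀ l : ℕ, 1 ≤ l → l ≤ d → 0 < φ l) :
    IsNorm (infConv N φ) ∧
      (∀ y : Fin d → ℝ,
        dualNorm (infConv N φ) y
          = sSup {r | ∃ l : ℕ, 1 ≤ l ∧ l ≤ d ∧ r = dualCoord N l y / φ l}) ∧
      ({y : Fin d → ℝ | dualNorm (infConv N φ) y ≤ 1}
          = ⋂ l ∈ Finset.Icc 1 d, {y : Fin d → ℝ | dualCoord N l y ≤ φ l}) ∧
      ∀ x : Fin d → ℝ, x ≠ 0 → infConv N φ x / N x ≤ φ (ell0 x) :=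
  ⟨isNorm_infConv hN hφpos, dualNorm_infConv hN hφpos,
    by ext y; simpa using dualNorm_infConv_le_one_iff hN hφpos y,
    fun x hx => (div_le_iff₀ (hN.pos hx)).2 (infConv_le_mul_of_ell0 hN hφpos hx)⟩

theorem statement19 {d : ℕ} (N : (Fin d → ℝ) → ℝ) (hN : IsNorm N) (φ : ℕ → ℝ)
    (hφ0 : φ 0 = 0) (hφpos : ∀ l : ℕ, 1 ≤ l → l ≤ d → 0 < φ l) :
    IsNorm (infConv N φ) ∧
      (∀ y : Fin d → ℝ,
        dualNorm (infConv N φ) y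
          = sSup {r | ∃ l : ℕ, 1 ≤ l ∧ l ≤ d ∧ r = dualCoord N l y / φ l}) ∧
      ({y : Fin d → ℝ | dualNorm (infConv N φ) y ≤ 1}
          = ⋂ l ∈ Finset.Icc 1 d, {y : Fin d → ℝ | dualCoord N l y ≤ φ l}) ∧
      ∀ x : Fin d → ℝ, x ≠ 0 → infConv N φ x / N x ≤ φ (ell0 x) :=
  statement19_general N hN φ hφpos
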